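/- arXiv:1402.3453 — 6 statements merged into one kernel-verified Lean document; each statement's English description precedes it below -/
import Mathlib

section
/- Suppose that m ≥ 3, that R = (R_ij) is symmetric, that the pointwise gradient Einstein-type equation holds with α ≠ 0, and set T = H_tt (the trace of H, i.e. Δf). Then for all i, j, k: D_ijk = (β/α) [ (1/(m−2))(f_j H_ik − f_k H_ij) + (1/((m−1)(m−2))) f_t (H_tj δ_ik − H_tk δ_ij) − (T/((m−1)(m−2)))(f_j δ_ik − f_k δ_ij) ]. -/
open Finset

noncomputable def kdelta {m : ℕ} (i j : Fin m) : ℝ := if i = j then 1 else 0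

noncomputable def Dt (m : ℕ) (R : Fin m → Fin m → ℝ) (f : Fin m → ℝ)
    (i j k : Fin m) : ℝ :=
  (1 / ((m : ℝ) - 2)) * (f k * R i j - f j * R i k)
  + (1 / (((m : ℝ) - 1) * ((m : ℝ) - 2))) *
      ∑ t, f t * (R t k * kdelta i j - R t j * kdelta i k)
  - ((∑ t, R t t) / (((m : ℝ) - 1) * ((m : ℝ) - 2))) *
      (f k * kdelta i j - f j * kdelta i k)

/-!
`D` is linear in its Ricci slot and annihilates both `δ` and `∇f ⊗ ∇f` (the latter in every
dimension, the former because `1/(m-2) + 1/((m-1)(m-2)) = m/((m-1)(m-2))`). The Einstein-type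
equation reads `α Ric = c δ - β Hess f - μ ∇f ⊗ ∇f` with `c = ρ S + λ`, so
`α D(Ric) = -β D(Hess f)`, and `-D(Hess f)` is the bracket on the right-hand side.
-/

section Dt

variable {m : ℕ} (f : Fin m → ℝ)

theorem Dt_apply_eq_contracted (R : Fin m → Fin m → ℝ) (i j k : Fin m) :
    Dt m R f i j k =
      (1 / ((m : ℝ) - 2)) * (f k * R i j - f j * R i k)
      + (1 / (((m : ℝ) - 1) * ((m : ℝ) - 2))) *
          ((∑ t, f t * R t k) * kdelta i j - (∑ t, f t * R t j) * kdelta i k)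
      - ((∑ t, R t t) / (((m : ℝ) - 1) * ((m : ℝ) - 2))) *
          (f k * kdelta i j - f j * kdelta i k) := by
  simp only [Dt, mul_sub, Finset.sum_sub_distrib, Finset.sum_mul, mul_assoc]

theorem Dt_add (A B : Fin m → Fin m → ℝ) : Dt m (A + B) f = Dt m A f + Dt m B f := by
  ext i j k
  simp only [Dt_apply_eq_contracted, Pi.add_apply, mul_add, Finset.sum_add_distrib]
  ring

theorem Dt_smul (c : ℝ) (A : Fin m → Fin m → ℝ) : Dt m (c • A) f = c • Dt m A f := by
  ext i j k
  simp only [Dt_apply_eq_contracted, Pi.smul_apply, smul_eq_mul, mul_left_comm _ c,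
    ← Finset.mul_sum]
  ring

theorem Dt_sub (A B : Fin m → Fin m → ℝ) : Dt m (A - B) f = Dt m A f - Dt m B f := by
  rw [sub_eq_add_neg, Dt_add, ← neg_one_smul ℝ B, Dt_smul, neg_one_smul, ← sub_eq_add_neg]

theorem Dt_kdelta (hm : 3 ≤ m) : Dt m kdelta f = 0 := by
  have hm : (3 : ℝ) ≤ m := by exact_mod_cast hm
  have h1 : (m : ℝ) - 1 ≠ 0 := by linarith
  have h2 : (m : ℝ) - 2 ≠ 0 := by linarith
  ext i j k
  have hcontract (l : Fin m) : ∑ t, f t * kdelta t l = f l := by simp [kdelta]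
  have htrace : ∑ t : Fin m, kdelta t t = m := by simp [kdelta]
  rw [Dt_apply_eq_contracted, hcontract, hcontract, htrace]
  simp only [Pi.zero_apply]
  field_simp
  ring

theorem Dt_outer_self : Dt m (fun a b => f a * f b) f = 0 := by
  ext i j k
  simp only [Dt_apply_eq_contracted, Pi.zero_apply, ← mul_assoc, ← Finset.sum_mul]
  ring

theorem neg_Dt_apply (H : Fin m → Fin m → ℝ) (i j k : Fin m) :
    -Dt m H f i j k =
      (1 / ((m : ℝ) - 2)) * (f j * H i k - f k * H i j)
        + (1 / (((m : ℝ) - 1) * ((m : ℝ) - 2))) *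
            ∑ t, f t * (H t j * kdelta i k - H t k * kdelta i j)
        - ((∑ t, H t t) / (((m : ℝ) - 1) * ((m : ℝ) - 2))) *
            (f j * kdelta i k - f k * kdelta i j) := by
  simp only [Dt, mul_sub, Finset.sum_sub_distrib]
  ring

end Dt

theorem D_via_Hessian_general (m : ℕ) (hm : 3 ≤ m)
    (R H : Fin m → Fin m → ℝ)
    (f : Fin m → ℝ) (α β μ ρ lam : ℝ) (hα : α ≠ 0)
    (heq : ∀ i j, α * R i j + β * H i j + μ * f i * f j
      = (ρ * (∑ t, R t t) + lam) * kdelta i j)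
    (T : ℝ) (hT : T = ∑ t, H t t) :
    ∀ i j k, Dt m R f i j k = (β / α) *
      ((1 / ((m : ℝ) - 2)) * (f j * H i k - f k * H i j)
        + (1 / (((m : ℝ) - 1) * ((m : ℝ) - 2))) *
            ∑ t, f t * (H t j * kdelta i k - H t k * kdelta i j)
        - (T / (((m : ℝ) - 1) * ((m : ℝ) - 2))) *
            (f j * kdelta i k - f k * kdelta i j)) := by
  intro i j k
  set c := ρ * (∑ t, R t t) + lam
  have hRic : R = α⁻¹ • (c • kdelta - β • H - μ • fun a b => f a * f b) := by
    ext a b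
    simp only [Pi.smul_apply, Pi.sub_apply, smul_eq_mul]
    field_simp
    linarith [heq a b]
  rw [hT, ← neg_Dt_apply, hRic, Dt_smul, Dt_sub, Dt_sub, Dt_smul, Dt_smul, Dt_smul,
    Dt_kdelta f hm, Dt_outer_self]
  simp only [Pi.smul_apply, Pi.sub_apply, Pi.zero_apply, smul_eq_mul]
  field_simp
  ring

/-- under the pointwise gradient Einstein-type equation with `α ≠ 0`,
the tensor `D` can be expressed through the Hessian components `H` and its trace `T`. -/
theorem D_via_Hessian (m : ℕ) (hm : 3 ≤ m)
    (R H : Fin m → Fin m → ℝ)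
    (hR : ∀ i j, R i j = R j i) (hH : ∀ i j, H i j = H j i)
    (f : Fin m → ℝ) (α β μ ρ lam : ℝ) (hα : α ≠ 0)
    (heq : ∀ i j, α * R i j + β * H i j + μ * f i * f j
      = (ρ * (∑ t, R t t) + lam) * kdelta i j)
    (T : ℝ) (hT : T = ∑ t, H t t) :
    ∀ i j k, Dt m R f i j k = (β / α) *
      ((1 / ((m : ℝ) - 2)) * (f j * H i k - f k * H i j)
        + (1 / (((m : ℝ) - 1) * ((m : ℝ) - 2))) *
            ∑ t, f t * (H t j * kdelta i k - H t k * kdelta i j)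
        - (T / (((m : ℝ) - 1) * ((m : ℝ) - 2))) *
            (f j * kdelta i k - f k * kdelta i j)) :=
  D_via_Hessian_general m hm R H f α β μ ρ lam hα heq T hT
end

section
/- For every integer m ≥ 3, every symmetric array R = (R_ij) and every vector f = (f_i), the squared norm of the tensor D satisfies |D|² := Σ_{i,j,k} (D_ijk)² = (2/(m−2)) Σ_{i,j,k} f_k R_ij D_ijk. -/
open Finset

lemma sum_kdelta_mul {m : ℕ} (i : Fin m) (g : Fin m → ℝ) :
    ∑ j, kdelta i j * g j = g i := by
  simp [kdelta, ite_mul]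

lemma sum_mul_kdelta {m : ℕ} (i : Fin m) (g : Fin m → ℝ) :
    ∑ j, g j * kdelta j i = g i := by
  simp [kdelta, mul_ite]

lemma pull1 {m : ℕ} (a : ℝ) (g : Fin m → ℝ) :
    ∑ i, a * g i = a * ∑ i, g i := by rw [Finset.mul_sum]

lemma pull3 {m : ℕ} (a : ℝ) (g : Fin m → Fin m → Fin m → ℝ) :
    ∑ i, ∑ j, ∑ k, a * g i j k = a * ∑ i, ∑ j, ∑ k, g i j k := by
  simp [Finset.mul_sum]

/-- A convenient reshaping of `Dt`. -/
lemma Dt_eq (m : ℕ) (R : Fin m → Fin m → ℝ) (f : Fin m → ℝ) (i j k : Fin m) :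
    Dt m R f i j k
      = (1 / ((m : ℝ) - 2)) * (f k * R i j - f j * R i k)
      + (1 / (((m : ℝ) - 1) * ((m : ℝ) - 2))) *
          ((∑ t, f t * R t k) * kdelta i j - (∑ t, f t * R t j) * kdelta i k)
      - ((∑ t, R t t) / (((m : ℝ) - 1) * ((m : ℝ) - 2))) *
          (f k * kdelta i j - f j * kdelta i k) := by
  unfold Dt
  rw [show ∑ t, f t * (R t k * kdelta i j - R t j * kdelta i k)
      = (∑ t, f t * R t k) * kdelta i j - (∑ t, f t * R t j) * kdelta i k by
    rw [Finset.sum_mul, Finset.sum_mul, ← Finset.sum_sub_distrib]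
    exact Finset.sum_congr rfl fun t _ => by ring]

lemma Dt_antisymm (m : ℕ) (R : Fin m → Fin m → ℝ) (f : Fin m → ℝ) (i j k : Fin m) :
    Dt m R f i k j = - Dt m R f i j k := by
  rw [Dt_eq, Dt_eq]
  ring

lemma Dt_trace {m : ℕ} (hm : 3 ≤ m) (R : Fin m → Fin m → ℝ) (f : Fin m → ℝ)
    (k : Fin m) : ∑ i, Dt m R f i i k = 0 := by
  have hm' : (3 : ℝ) ≤ (m : ℝ) := by exact_mod_cast hm
  have h2 : ((m : ℝ) - 2) ≠ 0 := by nlinarith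
  have h1 : ((m : ℝ) - 1) ≠ 0 := by nlinarith
  have hdii : ∀ i : Fin m, kdelta i i = (1 : ℝ) := fun i => by simp [kdelta]
  have key : ∀ i : Fin m, Dt m R f i i k =
      ((1 / ((m : ℝ) - 2)) * f k) * R i i
      - (1 / ((m : ℝ) - 2)) * (f i * R i k)
      + (1 / (((m : ℝ) - 1) * ((m : ℝ) - 2))) * (∑ t, f t * R t k)
      - ((1 / (((m : ℝ) - 1) * ((m : ℝ) - 2))) * (∑ t, f t * R t i)) * kdelta i k
      - ((∑ t, R t t) / (((m : ℝ) - 1) * ((m : ℝ) - 2))) * f k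
      + (((∑ t, R t t) / (((m : ℝ) - 1) * ((m : ℝ) - 2))) * f i) * kdelta i k := by
    intro i
    rw [Dt_eq, hdii i]
    ring
  simp only [key]
  rw [Finset.sum_add_distrib, Finset.sum_sub_distrib, Finset.sum_sub_distrib,
    Finset.sum_add_distrib, Finset.sum_sub_distrib]
  rw [pull1, pull1,
    sum_mul_kdelta k (fun i => (1 / (((m : ℝ) - 1) * ((m : ℝ) - 2))) * (∑ t, f t * R t i)),
    sum_mul_kdelta k (fun i => ((∑ t, R t t) / (((m : ℝ) - 1) * ((m : ℝ) - 2))) * f i),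
    Finset.sum_const, Finset.sum_const]
  simp only [Finset.card_univ, Fintype.card_fin, nsmul_eq_mul]
  have e2 : ∑ i, f i * R i k = ∑ t, f t * R t k := rfl
  rw [e2]
  field_simp
  ring

lemma contract1 {m : ℕ} (hm : 3 ≤ m) (R : Fin m → Fin m → ℝ) (f : Fin m → ℝ)
    (c : Fin m → ℝ) :
    ∑ i, ∑ j, ∑ k, c k * (kdelta i j * Dt m R f i j k) = 0 := by
  have step : ∀ i : Fin m, ∑ j, ∑ k, c k * (kdelta i j * Dt m R f i j k)
      = ∑ k, c k * Dt m R f i i k := by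
    intro i
    rw [Finset.sum_comm]
    refine Finset.sum_congr rfl fun k _ => ?_
    rw [show ∑ j, c k * (kdelta i j * Dt m R f i j k)
        = c k * ∑ j, kdelta i j * Dt m R f i j k by rw [Finset.mul_sum],
      sum_kdelta_mul i (fun j => Dt m R f i j k)]
  simp only [step]
  rw [Finset.sum_comm]
  refine Finset.sum_eq_zero fun k _ => ?_
  rw [← Finset.mul_sum, Dt_trace hm, mul_zero]

lemma contract2 {m : ℕ} (hm : 3 ≤ m) (R : Fin m → Fin m → ℝ) (f : Fin m → ℝ)
    (c : Fin m → ℝ) :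
    ∑ i, ∑ j, ∑ k, c j * (kdelta i k * Dt m R f i j k) = 0 := by
  have step : ∀ i : Fin m, ∑ j, ∑ k, c j * (kdelta i k * Dt m R f i j k)
      = ∑ j, -(c j * Dt m R f i i j) := by
    intro i
    refine Finset.sum_congr rfl fun j _ => ?_
    rw [show ∑ k, c j * (kdelta i k * Dt m R f i j k)
        = c j * ∑ k, kdelta i k * Dt m R f i j k by rw [Finset.mul_sum],
      sum_kdelta_mul i (fun k => Dt m R f i j k)]
    rw [show Dt m R f i j i = - Dt m R f i i j from Dt_antisymm m R f i i j]
    ring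
  simp only [step]
  rw [Finset.sum_comm]
  refine Finset.sum_eq_zero fun j _ => ?_
  rw [show ∑ i, -(c j * Dt m R f i i j) = -(c j * ∑ i, Dt m R f i i j) by
    rw [Finset.mul_sum, Finset.sum_neg_distrib],
    Dt_trace hm, mul_zero, neg_zero]

/-- the squared norm of `D` equals `(2/(m-2)) Σ f_k R_ij D_ijk`. -/
theorem D_norm_sq (m : ℕ) (hm : 3 ≤ m)
    (R : Fin m → Fin m → ℝ) (hR : ∀ i j, R i j = R j i)
    (f : Fin m → ℝ) :
    ∑ i, ∑ j, ∑ k, (Dt m R f i j k) ^ 2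
      = (2 / ((m : ℝ) - 2)) * ∑ i, ∑ j, ∑ k, f k * R i j * Dt m R f i j k := by
  have expand : ∀ i j k : Fin m, (Dt m R f i j k) ^ 2
      = (1 / ((m : ℝ) - 2)) * (f k * R i j * Dt m R f i j k)
      - (1 / ((m : ℝ) - 2)) * (f j * R i k * Dt m R f i j k)
      + ((1 / (((m : ℝ) - 1) * ((m : ℝ) - 2))) * (∑ t, f t * R t k)) *
          (kdelta i j * Dt m R f i j k)
      - ((1 / (((m : ℝ) - 1) * ((m : ℝ) - 2))) * (∑ t, f t * R t j)) *
          (kdelta i k * Dt m R f i j k)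
      - (((∑ t, R t t) / (((m : ℝ) - 1) * ((m : ℝ) - 2))) * f k) *
          (kdelta i j * Dt m R f i j k)
      + (((∑ t, R t t) / (((m : ℝ) - 1) * ((m : ℝ) - 2))) * f j) *
          (kdelta i k * Dt m R f i j k) := by
    intro i j k
    rw [pow_two]
    nth_rewrite 1 [Dt_eq]
    ring
  simp only [expand]
  simp only [Finset.sum_add_distrib, Finset.sum_sub_distrib]
  rw [pull3, pull3,
    contract1 hm R f (fun k => (1 / (((m : ℝ) - 1) * ((m : ℝ) - 2))) * (∑ t, f t * R t k)),
    contract2 hm R f (fun j => (1 / (((m : ℝ) - 1) * ((m : ℝ) - 2))) * (∑ t, f t * R t j)),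
    contract1 hm R f (fun k => ((∑ t, R t t) / (((m : ℝ) - 1) * ((m : ℝ) - 2))) * f k),
    contract2 hm R f (fun j => ((∑ t, R t t) / (((m : ℝ) - 1) * ((m : ℝ) - 2))) * f j)]
  have hT2 : ∑ i, ∑ j, ∑ k, f j * R i k * Dt m R f i j k
      = - ∑ i, ∑ j, ∑ k, f k * R i j * Dt m R f i j k := by
    rw [← Finset.sum_neg_distrib]
    refine Finset.sum_congr rfl fun i _ => ?_
    rw [Finset.sum_comm, ← Finset.sum_neg_distrib]
    refine Finset.sum_congr rfl fun x _ => ?_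
    rw [← Finset.sum_neg_distrib]
    refine Finset.sum_congr rfl fun y _ => ?_
    rw [show Dt m R f i y x = - Dt m R f i x y from Dt_antisymm m R f i x y]
    ring
  rw [hT2]
  ring
end

section
/- (Algebraic content of level-set rigidity when D = 0.) Let m ≥ 3, let R = (R_ij) be symmetric with S = R_tt, let f satisfy the adapted-frame condition with w ≠ 0, and suppose the pointwise gradient Einstein-type equation holds with α ≠ 0 and β ≠ 0. Define h_ab = −H_ab / w for a, b ∈ {1,…,m−1} and h = (1/(m−1)) Σ_a h_aa. If D_ijk = 0 for all i, j, k, then: (i) R_am = 0 for every a ∈ {1,…,m−1}; (ii) h_ab = h δ_ab for all a, b ∈ {1,…,m−1} (umbilicity); and (iii) R_ab = ((S − R_mm)/(m−1)) δ_ab for all a, b ∈ {1,…,m−1}. -/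
open Finset

/-!
In the adapted frame `∇f = w eₘ`, two families of components of `D` are explicit:
`D_{mam} = w R_{ma} / (m-1)` and `D_{abm} = w/(m-2) (R_{ab} - (S - R_{mm})/(m-1) δ_{ab})`.
Hence `D = 0` gives (i) and (iii). Since `f_a = 0`, the equation on tangential indices reads
`α R_{ab} + β H_{ab} = (ρS + λ) δ_{ab}`, so by (iii) `H_{ab}`, and with it `h_{ab}`, is a multiple
of `δ_{ab}`; that multiple is necessarily the mean `h`.
-/

lemma mean_sum_erase_eq_of_eq_const {m : ℕ} (hm : 2 ≤ m) (e : Fin m) {g : Fin m → ℝ} {κ : ℝ}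
    (hg : ∀ a, a ≠ e → g a = κ) :
    1 / ((m : ℝ) - 1) * ∑ a ∈ univ.erase e, g a = κ := by
  have h1 : (m : ℝ) - 1 ≠ 0 := by
    have : (2 : ℝ) ≤ m := by exact_mod_cast hm
    linarith
  rw [sum_congr rfl fun a ha => hg a (ne_of_mem_erase ha), sum_const,
    card_erase_of_mem (mem_univ e), card_univ, Fintype.card_fin, nsmul_eq_mul,
    Nat.cast_sub (by omega), Nat.cast_one]
  field_simp

section AdaptedFrame

variable {m : ℕ} {f : Fin m → ℝ} {e : Fin m}

lemma sum_mul_eq_of_eq_zero_of_ne (hf : ∀ a, a ≠ e → f a = 0) (g : Fin m → ℝ) :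
    ∑ t, f t * g t = f e * g e :=
  Fintype.sum_eq_single e fun t ht => by rw [hf t ht, zero_mul]

lemma Dt_normal_tangential_normal (hm : 3 ≤ m) (R : Fin m → Fin m → ℝ)
    (hf : ∀ a, a ≠ e → f a = 0) {a : Fin m} (ha : a ≠ e) :
    Dt m R f e a e = f e / ((m : ℝ) - 1) * R e a := by
  have hm' : (3 : ℝ) ≤ m := by exact_mod_cast hm
  have h1 : (m : ℝ) - 1 ≠ 0 := by linarith
  have h2 : (m : ℝ) - 2 ≠ 0 := by linarith
  simp only [Dt, sum_mul_eq_of_eq_zero_of_ne hf, kdelta, if_neg ha.symm, ↓reduceIte, hf a ha]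
  field_simp
  ring

lemma Dt_tangential_tangential_normal (hm : 3 ≤ m) (R : Fin m → Fin m → ℝ)
    (hf : ∀ a, a ≠ e → f a = 0) {a b : Fin m} (ha : a ≠ e) (hb : b ≠ e) :
    Dt m R f a b e =
      f e / ((m : ℝ) - 2) * (R a b - ((∑ t, R t t) - R e e) / ((m : ℝ) - 1) * kdelta a b) := by
  have hm' : (3 : ℝ) ≤ m := by exact_mod_cast hm
  have h1 : (m : ℝ) - 1 ≠ 0 := by linarith
  have h2 : (m : ℝ) - 2 ≠ 0 := by linarith
  simp only [Dt, sum_mul_eq_of_eq_zero_of_ne hf, kdelta, if_neg ha, hf b hb]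
  field_simp
  ring

lemma ricci_normal_tangential_eq_zero_of_Dt (hm : 3 ≤ m) {R : Fin m → Fin m → ℝ} {a : Fin m}
    (hf : ∀ a, a ≠ e → f a = 0) (hfe : f e ≠ 0) (ha : a ≠ e)
    (hD : Dt m R f e a e = 0) : R e a = 0 := by
  have h1 : (m : ℝ) - 1 ≠ 0 := by
    have : (3 : ℝ) ≤ m := by exact_mod_cast hm
    linarith
  rw [Dt_normal_tangential_normal hm R hf ha] at hD
  exact (mul_eq_zero.mp hD).resolve_left (div_ne_zero hfe h1)

lemma ricci_tangential_eq_of_Dt (hm : 3 ≤ m) {R : Fin m → Fin m → ℝ} {a b : Fin m}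
    (hf : ∀ a, a ≠ e → f a = 0) (hfe : f e ≠ 0) (ha : a ≠ e)
    (hb : b ≠ e) (hD : Dt m R f a b e = 0) :
    R a b = ((∑ t, R t t) - R e e) / ((m : ℝ) - 1) * kdelta a b := by
  have h2 : (m : ℝ) - 2 ≠ 0 := by
    have : (3 : ℝ) ≤ m := by exact_mod_cast hm
    linarith
  rw [Dt_tangential_tangential_normal hm R hf ha hb] at hD
  exact sub_eq_zero.mp ((mul_eq_zero.mp hD).resolve_left (div_ne_zero hfe h2))

end AdaptedFrame

theorem level_set_rigidity_of_D_zero_general (m : ℕ) (hm : 3 ≤ m)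
    (R H : Fin m → Fin m → ℝ)
    (hR : ∀ i j, R i j = R j i)
    (f : Fin m → ℝ) (e : Fin m) (w : ℝ) (hw : w ≠ 0)
    (hfa : ∀ a, a ≠ e → f a = 0) (hfe : f e = w)
    (α β μ ρ lam : ℝ) (hβ : β ≠ 0)
    (heq : ∀ i j, α * R i j + β * H i j + μ * f i * f j
      = (ρ * (∑ t, R t t) + lam) * kdelta i j)
    (h : Fin m → Fin m → ℝ) (hdef : ∀ a b, h a b = - H a b / w)
    (hmean : ℝ)
    (hmeandef : hmean = (1 / ((m : ℝ) - 1)) * ∑ a ∈ Finset.univ.erase e, h a a)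
    (hD : ∀ i j k, Dt m R f i j k = 0) :
    (∀ a, a ≠ e → R a e = 0) ∧
    (∀ a b, a ≠ e → b ≠ e → h a b = hmean * kdelta a b) ∧
    (∀ a b, a ≠ e → b ≠ e →
      R a b = (((∑ t, R t t) - R e e) / ((m : ℝ) - 1)) * kdelta a b) := by
  subst hfe
  set c := ((∑ t, R t t) - R e e) / ((m : ℝ) - 1)
  have ricci_tangential : ∀ a b, a ≠ e → b ≠ e → R a b = c * kdelta a b :=
    fun a b ha hb => ricci_tangential_eq_of_Dt hm hfa hw ha hb (hD a b e)
  clear_value c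
  obtain ⟨κ, umbilic⟩ : ∃ κ, ∀ a b, a ≠ e → b ≠ e → h a b = κ * kdelta a b := by
    refine ⟨(α * c - (ρ * ∑ t, R t t + lam)) / (β * f e), fun a b ha hb => ?_⟩
    have hab := heq a b
    rw [hfa a ha, ricci_tangential a b ha hb] at hab
    rw [hdef]
    field_simp
    linear_combination -hab
  have hmean_eq : hmean = κ := hmeandef ▸
    mean_sum_erase_eq_of_eq_const (by omega) e fun a ha => by simp [umbilic a a ha ha, kdelta]
  exact ⟨fun a ha => hR a e ▸ ricci_normal_tangential_eq_zero_of_Dt hm hfa hw ha (hD e a e),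
    fun a b ha hb => hmean_eq ▸ umbilic a b ha hb, ricci_tangential⟩

/-- level-set rigidity when `D = 0`: vanishing of the mixed Ricci
components, umbilicity of the level set, and the form of the tangential Ricci
components. Here `e` is the distinguished last index and lowercase indices range
over the complement of `e` (i.e. `{1,…,m−1}`). -/
theorem level_set_rigidity_of_D_zero (m : ℕ) (hm : 3 ≤ m)
    (R H : Fin m → Fin m → ℝ)
    (hR : ∀ i j, R i j = R j i) (hHsymm : ∀ i j, H i j = H j i)
    (f : Fin m → ℝ) (e : Fin m) (w : ℝ) (hw : w ≠ 0)
    (hfa : ∀ a, a ≠ e → f a = 0) (hfe : f e = w)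
    (α β μ ρ lam : ℝ) (hα : α ≠ 0) (hβ : β ≠ 0)
    (heq : ∀ i j, α * R i j + β * H i j + μ * f i * f j
      = (ρ * (∑ t, R t t) + lam) * kdelta i j)
    (h : Fin m → Fin m → ℝ) (hdef : ∀ a b, h a b = - H a b / w)
    (hmean : ℝ)
    (hmeandef : hmean = (1 / ((m : ℝ) - 1)) * ∑ a ∈ Finset.univ.erase e, h a a)
    (hD : ∀ i j k, Dt m R f i j k = 0) :
    (∀ a, a ≠ e → R a e = 0) ∧
    (∀ a b, a ≠ e → b ≠ e → h a b = hmean * kdelta a b) ∧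
    (∀ a b, a ≠ e → b ≠ e →
      R a b = (((∑ t, R t t) - R e e) / ((m : ℝ) - 1)) * kdelta a b) :=
  level_set_rigidity_of_D_zero_general m hm R H hR f e w hw hfa hfe α β μ ρ lam hβ heq h hdef hmean
    hmeandef hD
end

section
/- (Case β = 0.) Let m ≥ 3, let R = (R_ij) be symmetric with S = R_tt, let f = (f_i) be a vector, and suppose there are real numbers α ≠ 0, μ, ρ, λ such that α R_ij + μ f_i f_j = (ρ S + λ) δ_ij for all i, j. Then the tensor D vanishes identically: D_ijk = 0 for all i, j, k. -/
open Finset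

/-- in the case `β = 0`, i.e. when `α R_ij + μ f_i f_j = (ρ S + λ) δ_ij`
with `α ≠ 0`, the tensor `D` vanishes identically. -/
theorem D_zero_of_beta_zero (m : ℕ) (hm : 3 ≤ m)
    (R : Fin m → Fin m → ℝ) (hR : ∀ i j, R i j = R j i)
    (f : Fin m → ℝ) (α μ ρ lam : ℝ) (hα : α ≠ 0)
    (heq : ∀ i j, α * R i j + μ * f i * f j
      = (ρ * (∑ t, R t t) + lam) * kdelta i j) :
    ∀ i j k, Dt m R f i j k = 0 := by
  intro i j k
  have hm3 : (3:ℝ) ≤ (m:ℝ) := by exact_mod_cast hm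
  have hm2 : ((m:ℝ) - 2) ≠ 0 := by linarith
  have hm1 : ((m:ℝ) - 1) ≠ 0 := by linarith
  set S := ∑ t, R t t with hSdef
  set c := ρ * S + lam with hc
  have hA : ∀ a b, R a b = (c * kdelta a b - μ * f a * f b) / α := by
    intro a b
    have h := heq a b
    field_simp
    linarith
  set F := ∑ t, f t * f t with hF
  have hdel : ∀ a : Fin m, (∑ t, f t * kdelta t a) = f a := by
    intro a
    simp [kdelta]
  have hsum : ∀ a : Fin m, (∑ t, f t * R t a) = (c * f a - μ * F * f a) / α := by
    intro a
    have h1 : ∀ t : Fin m, f t * R t a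
        = (c * (f t * kdelta t a) - μ * ((f t * f t) * f a)) / α := by
      intro t; rw [hA]; ring
    rw [Finset.sum_congr rfl (fun t _ => h1 t), ← Finset.sum_div]
    rw [Finset.sum_sub_distrib, ← Finset.mul_sum, ← Finset.mul_sum, hdel,
      ← Finset.sum_mul]
    rw [← hF]
    ring_nf
  have hStrace : S = ((m:ℝ) * c - μ * F) / α := by
    have h1 : ∀ t : Fin m, R t t = (c - μ * (f t * f t)) / α := by
      intro t
      rw [hA t t]
      simp [kdelta]
      ring
    rw [hSdef, Finset.sum_congr rfl (fun t _ => h1 t), ← Finset.sum_div]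
    rw [Finset.sum_sub_distrib, Finset.sum_const, ← Finset.mul_sum, ← hF]
    simp [mul_comm]
  have hbig : (∑ t, f t * (R t k * kdelta i j - R t j * kdelta i k))
      = (∑ t, f t * R t k) * kdelta i j - (∑ t, f t * R t j) * kdelta i k := by
    rw [show (∑ t, f t * (R t k * kdelta i j - R t j * kdelta i k))
        = ∑ t, (f t * R t k * kdelta i j - f t * R t j * kdelta i k) from
      Finset.sum_congr rfl (fun t _ => by ring)]
    rw [Finset.sum_sub_distrib, ← Finset.sum_mul, ← Finset.sum_mul]
  rw [Dt, ← hSdef, hbig, hsum, hsum, hA i j, hA i k, hStrace]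
  field_simp
  ring
end

section
/- (Algebraic content of the four-dimensional Weyl vanishing.) Let W = (W_ijkl) be a 4-tensor on index set {1,2,3,4} satisfying: the symmetries W_ijkl = −W_jikl = −W_ijlk = W_klij; the first Bianchi identity W_ijkl + W_iljk + W_iklj = 0; and total trace-freeness Σ_i W_ikil = 0 for all k, l. If W_4jkl = 0 for all j, k, l (i.e. W annihilates the fixed direction e₄ in its first slot), then W_ijkl = 0 for all i, j, k, l. -/
open Finset

lemma fin4_pigeon : ∀ a b c d : Fin 4, a ≠ b → a ≠ c → a ≠ d → b ≠ c → b ≠ d → c ≠ d →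
    ∀ i : Fin 4, i = a ∨ i = b ∨ i = c ∨ i = d := by decide

lemma fin4_exists : ∀ a b c : Fin 4, a ≠ b → a ≠ c → b ≠ c →
    ∃ d : Fin 4, d ≠ a ∧ d ≠ b ∧ d ≠ c := by decide

/-- a four-dimensional algebraic Weyl tensor (curvature-type symmetries,
first Bianchi identity, totally trace-free) that annihilates a fixed direction `e`
(e.g. `e₄`) in its first slot vanishes identically. -/
theorem Weyl_four_dim_vanishing
    (W : Fin 4 → Fin 4 → Fin 4 → Fin 4 → ℝ)
    (hsymm1 : ∀ i j k l, W i j k l = - W j i k l)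
    (hsymm2 : ∀ i j k l, W i j k l = - W i j l k)
    (hsymm3 : ∀ i j k l, W i j k l = W k l i j)
    (hBianchi : ∀ i j k l, W i j k l + W i l j k + W i k l j = 0)
    (htrace : ∀ k l, ∑ i, W i k i l = 0)
    (e : Fin 4)
    (he : ∀ j k l, W e j k l = 0) :
    ∀ i j k l, W i j k l = 0 := by
  -- basic vanishing lemmas
  have d1 : ∀ i k l, W i i k l = 0 := by
    intro i k l; have h := hsymm1 i i k l; linarith
  have d2 : ∀ i j k, W i j k k = 0 := by
    intro i j k; have h := hsymm2 i j k k; linarith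
  have z1 : ∀ j k l, W j e k l = 0 := by
    intro j k l; rw [hsymm1, he, neg_zero]
  have z2 : ∀ j k l, W j k e l = 0 := by
    intro j k l; rw [hsymm3, he]
  have z3 : ∀ j k l, W j k l e = 0 := by
    intro j k l; rw [hsymm2, z2, neg_zero]
  have hsw : ∀ p q, W q p q p = W p q p q := by
    intro p q
    have h1 := hsymm1 q p q p
    have h2 := hsymm2 p q q p
    linarith
  -- trace lemma: W x y x z = 0 for x,y,z,e pairwise distinct
  have L1 : ∀ x y z : Fin 4, x ≠ y → x ≠ z → y ≠ z → x ≠ e → y ≠ e → z ≠ e →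
      W x y x z = 0 := by
    intro x y z hxy hxz hyz hxe hye hze
    have ht := htrace y z
    have hs : ∑ i, W i y i z = W x y x z := by
      refine Finset.sum_eq_single_of_mem x (Finset.mem_univ x) ?_
      intro b _ hb
      rcases fin4_pigeon x y z e hxy hxz hxe hyz hye hze b with h | h | h | h
      · exact absurd h hb
      · rw [h]; exact d1 y y z
      · rw [h]; exact d2 z y z
      · rw [h]; exact he y e z
    linarith
  -- sum with two surviving terms
  have sum2 : ∀ p q y : Fin 4, p ≠ q → p ≠ y → p ≠ e → q ≠ y → q ≠ e → y ≠ e →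
      ∑ i, W i y i y = W p y p y + W q y q y := by
    intro p q y hpq hpy hpe hqy hqe hye
    have huniv : (Finset.univ : Finset (Fin 4)) = {p, q, y, e} := by
      ext i
      simp only [Finset.mem_univ, Finset.mem_insert, Finset.mem_singleton, true_iff]
      exact fin4_pigeon p q y e hpq hpy hpe hqy hqe hye i
    rw [huniv]
    rw [Finset.sum_insert (by simp [hpq, hpy, hpe]),
        Finset.sum_insert (by simp [hqy, hqe]),
        Finset.sum_insert (by simp [hye]),
        Finset.sum_singleton]
    rw [d1, he]
    ring
  -- diagonal lemma: W x y x y = 0 for x ≠ y, x ≠ e, y ≠ e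
  have L2 : ∀ x y : Fin 4, x ≠ y → x ≠ e → y ≠ e → W x y x y = 0 := by
    intro x y hxy hxe hye
    obtain ⟨z, hzx, hzy, hze⟩ := fin4_exists x y e hxy hxe hye
    have r1 : W x y x y + W z y z y = 0 := by
      have := sum2 x z y hzx.symm hxy hxe hzy hze hye
      have ht := htrace y y
      linarith
    have r2 : W y x y x + W z x z x = 0 := by
      have := sum2 y z x (Ne.symm hzy) (Ne.symm hxy) hye hzx hze hxe
      have ht := htrace x x
      linarith
    have r3 : W x z x z + W y z y z = 0 := by
      have := sum2 x y z hxy hzx.symm hxe hzy.symm hye hze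
      have ht := htrace z z
      linarith
    have s1 := hsw x y
    have s2 := hsw x z
    have s3 := hsw y z
    have s4 := hsw z y
    linarith
  -- main argument
  intro i j k l
  rcases eq_or_ne i e with rfl | hie
  · exact he j k l
  rcases eq_or_ne j e with rfl | hje
  · exact z1 i k l
  rcases eq_or_ne k e with rfl | hke
  · exact z2 i j l
  rcases eq_or_ne l e with rfl | hle
  · exact z3 i j k
  rcases eq_or_ne i j with rfl | hij
  · exact d1 i k l
  rcases eq_or_ne k l with rfl | hkl
  · exact d2 i j k
  rcases eq_or_ne k i with hk | hki
  · -- k = i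
    rw [hk]
    rcases eq_or_ne l j with hl | hlj
    · rw [hl]; exact L2 i j hij hie hje
    · exact L1 i j l hij (hk.symm.trans_ne hkl) (Ne.symm hlj) hie hje hle
  rcases eq_or_ne k j with hk | hkj
  · -- k = j
    rw [hk, hsymm1]
    rcases eq_or_ne l i with hl | hli
    · rw [hl, hsw i j, L2 i j hij hie hje]; exact neg_zero
    · rw [L1 j i l (Ne.symm hij) (hk.symm.trans_ne hkl) (Ne.symm hli) hje hie hle]
      exact neg_zero
  · -- k not in {i, j}, so l = i or l = j
    have hl : l = i ∨ l = j := by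
      rcases fin4_pigeon i j k e hij (Ne.symm hki) hie (Ne.symm hkj) hje hke l with
        h | h | h | h
      · exact Or.inl h
      · exact Or.inr h
      · exact absurd h (Ne.symm hkl)
      · exact absurd h hle
    rcases hl with hl | hl
    · rw [hl, hsymm3, hsymm1,
        L1 i k j (Ne.symm hki) hij hkj hie hke hje]
      exact neg_zero
    · rw [hl]
      have h1 := hsymm3 i j k j
      have h2 := hsymm1 k j i j
      have h3 := hsymm2 j k i j
      have h4 := L1 j k i (Ne.symm hkj) (Ne.symm hij) hki hje hke hie
      linarith
end

section
/- (Squared norm of the traceless second fundamental form.) Let m ≥ 3, let R = (R_ij) be symmetric with S = R_tt, let f satisfy the adapted-frame condition with w ≠ 0, and suppose the pointwise gradient Einstein-type equation holds with β ≠ 0. Define h_ab = −H_ab / w for a, b ∈ {1,…,m−1} and h = (1/(m−1)) Σ_a h_aa. Then Σ_{a,b} (h_ab − h δ_ab)² = (α²/(β² w²)) [ Σ_{i,j} (R_ij)² − 2 Σ_a (R_am)² − (m/(m−1)) (R_mm)² − S²/(m−1) + (2/(m−1)) S R_mm ]. -/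
open Finset

/-! The Einstein-type equation, restricted to the level hypersurface `f_a = 0`, says that
`β · Hess f` agrees there with `-α · Ric` up to a multiple of the identity. The second fundamental
form `h = -Hess f / w` is therefore an affine function of `Ric` whose linear part is
`α / (β w)`, and taking traceless parts kills the multiple of the identity. What remains is the
traceless norm `Σ R_ab² - (Σ R_aa)² / (m - 1)` of the tangential block of `Ric`, rewritten through
the full Ricci tensor by splitting off the normal row and column. -/

section Kdelta

variable {m : ℕ}

@[simp]
lemma kdelta_self (i : Fin m) : kdelta i i = 1 := if_pos rfl

lemma kdelta_sq (i j : Fin m) : kdelta i j ^ 2 = kdelta i j := by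
  unfold kdelta
  split_ifs <;> norm_num

lemma sum_mul_kdelta_s12 {s : Finset (Fin m)} {a : Fin m} (ha : a ∈ s) (x : Fin m → ℝ) :
    ∑ b ∈ s, x b * kdelta a b = x a := by
  simp [kdelta, ha]

end Kdelta

noncomputable def tracelessNormSq {m : ℕ} (s : Finset (Fin m)) (A : Fin m → Fin m → ℝ) : ℝ :=
  ∑ a ∈ s, ∑ b ∈ s, (A a b - 1 / (#s : ℝ) * (∑ c ∈ s, A c c) * kdelta a b) ^ 2

section TracelessNormSq

variable {m : ℕ} (s : Finset (Fin m))

lemma tracelessNormSq_congr {A B : Fin m → Fin m → ℝ} (hAB : ∀ a ∈ s, ∀ b ∈ s, A a b = B a b) :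
    tracelessNormSq s A = tracelessNormSq s B := by
  unfold tracelessNormSq
  rw [sum_congr rfl fun a ha => hAB a ha a ha]
  exact sum_congr rfl fun a ha => sum_congr rfl fun b hb => by rw [hAB a ha b hb]

lemma tracelessNormSq_eq (A : Fin m → Fin m → ℝ) :
    tracelessNormSq s A = ∑ a ∈ s, ∑ b ∈ s, A a b ^ 2 - (∑ c ∈ s, A c c) ^ 2 / #s := by
  rcases s.eq_empty_or_nonempty with rfl | hs
  · simp [tracelessNormSq]
  set t := 1 / (#s : ℝ) * ∑ c ∈ s, A c c
  have hrow : ∀ a ∈ s, ∑ b ∈ s, (A a b - t * kdelta a b) ^ 2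
      = ∑ b ∈ s, A a b ^ 2 - 2 * t * A a a + t ^ 2 := by
    intro a ha
    have hexpand : ∀ b, (A a b - t * kdelta a b) ^ 2
        = A a b ^ 2 - 2 * t * (A a b * kdelta a b) + t ^ 2 * kdelta a b := by
      intro b
      linear_combination t ^ 2 * kdelta_sq a b
    simp only [hexpand, sum_add_distrib, sum_sub_distrib, ← mul_sum, sum_mul_kdelta_s12 ha]
  have hcard : (#s : ℝ) ≠ 0 := by exact_mod_cast hs.card_ne_zero
  rw [tracelessNormSq, sum_congr rfl hrow, sum_add_distrib, sum_sub_distrib, ← mul_sum,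
    sum_const, nsmul_eq_mul]
  simp only [t]
  field_simp
  ring

lemma tracelessNormSq_smul_sub_kdelta (hs : s.Nonempty) (k c : ℝ) (A : Fin m → Fin m → ℝ) :
    tracelessNormSq s (fun a b => k * A a b - c * kdelta a b) = k ^ 2 * tracelessNormSq s A := by
  have hcard : (#s : ℝ) ≠ 0 := by exact_mod_cast hs.card_ne_zero
  have hmean : 1 / (#s : ℝ) * ∑ a ∈ s, (k * A a a - c * kdelta a a)
      = k * (1 / (#s : ℝ) * ∑ a ∈ s, A a a) - c := by
    simp only [kdelta_self, mul_one, sum_sub_distrib, ← mul_sum, sum_const, nsmul_eq_mul]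
    field_simp
  have hterm : ∀ a b (t : ℝ), (k * A a b - c * kdelta a b - (k * t - c) * kdelta a b) ^ 2
      = k ^ 2 * (A a b - t * kdelta a b) ^ 2 := fun a b t => by ring
  simp only [tracelessNormSq, hmean, hterm, ← mul_sum]

end TracelessNormSq

lemma sum_sum_sq_eq_erase {ι : Type*} [Fintype ι] [DecidableEq ι] {R : ι → ι → ℝ}
    (hR : ∀ i j, R i j = R j i) (e : ι) :
    ∑ i, ∑ j, R i j ^ 2 = ∑ a ∈ univ.erase e, ∑ b ∈ univ.erase e, R a b ^ 2
      + 2 * ∑ a ∈ univ.erase e, R a e ^ 2 + R e e ^ 2 := by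
  have hsplit : ∀ i, ∑ j, R i j ^ 2 = ∑ b ∈ univ.erase e, R i b ^ 2 + R i e ^ 2 := fun i =>
    (sum_erase_add _ _ (mem_univ e)).symm
  rw [← sum_erase_add _ _ (mem_univ e), sum_congr rfl fun a _ => hsplit a, hsplit e,
    sum_add_distrib]
  simp only [hR e]
  ring

theorem traceless_second_fundamental_form_norm_sq_general (m : ℕ) (hm : 3 ≤ m)
    (R H : Fin m → Fin m → ℝ)
    (hR : ∀ i j, R i j = R j i)
    (f : Fin m → ℝ) (e : Fin m) (w : ℝ)
    (hfa : ∀ a, a ≠ e → f a = 0)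
    (α β μ ρ lam : ℝ) (hβ : β ≠ 0)
    (heq : ∀ i j, α * R i j + β * H i j + μ * f i * f j
      = (ρ * (∑ t, R t t) + lam) * kdelta i j)
    (h : Fin m → Fin m → ℝ) (hdef : ∀ a b, h a b = - H a b / w)
    (hmean : ℝ)
    (hmeandef : hmean = (1 / ((m : ℝ) - 1)) * ∑ a ∈ Finset.univ.erase e, h a a) :
    ∑ a ∈ Finset.univ.erase e, ∑ b ∈ Finset.univ.erase e,
        (h a b - hmean * kdelta a b) ^ 2
      = (α ^ 2 / (β ^ 2 * w ^ 2)) *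
          ((∑ i, ∑ j, (R i j) ^ 2)
            - 2 * ∑ a ∈ Finset.univ.erase e, (R a e) ^ 2
            - ((m : ℝ) / ((m : ℝ) - 1)) * (R e e) ^ 2
            - (∑ t, R t t) ^ 2 / ((m : ℝ) - 1)
            + (2 / ((m : ℝ) - 1)) * (∑ t, R t t) * R e e) := by
  set s := univ.erase e
  set S := ∑ t, R t t
  have hcard : (#s : ℝ) = m - 1 := by
    rw [card_erase_of_mem (mem_univ e), card_univ, Fintype.card_fin, Nat.cast_pred (by omega)]
  have hs : s.Nonempty := by
    rw [← card_pos, card_erase_of_mem (mem_univ e), card_univ, Fintype.card_fin]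
    omega
  have hshape : ∀ a ∈ s, ∀ b ∈ s,
      h a b = α / (β * w) * R a b - (ρ * S + lam) / (β * w) * kdelta a b := by
    intro a ha b _
    have hH : H a b = ((ρ * S + lam) * kdelta a b - α * R a b) / β := by
      rw [eq_div_iff hβ]
      linear_combination heq a b - μ * f b * hfa a (ne_of_mem_erase ha)
    rw [hdef, hH]
    ring
  have hS : S = ∑ a ∈ s, R a a + R e e := (sum_erase_add _ _ (mem_univ e)).symm
  have hLHS : ∑ a ∈ s, ∑ b ∈ s, (h a b - hmean * kdelta a b) ^ 2 = tracelessNormSq s h := by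
    rw [tracelessNormSq, hcard, hmeandef]
  rw [hLHS, tracelessNormSq_congr s hshape, tracelessNormSq_smul_sub_kdelta s hs,
    tracelessNormSq_eq, hcard, sum_sum_sq_eq_erase hR e, hS]
  have hm1 : (m : ℝ) - 1 ≠ 0 := by rw [← hcard]; exact_mod_cast hs.card_ne_zero
  field_simp
  ring

/-- squared norm of the traceless second fundamental form of a regular
level set, in an adapted frame, under the pointwise gradient Einstein-type equation
with `β ≠ 0`. Here `e` is the distinguished last index and lowercase indices range
over the complement of `e` (i.e. `{1,…,m−1}`). -/
theorem traceless_second_fundamental_form_norm_sq (m : ℕ) (hm : 3 ≤ m)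
    (R H : Fin m → Fin m → ℝ)
    (hR : ∀ i j, R i j = R j i) (hHsymm : ∀ i j, H i j = H j i)
    (f : Fin m → ℝ) (e : Fin m) (w : ℝ) (hw : w ≠ 0)
    (hfa : ∀ a, a ≠ e → f a = 0) (hfe : f e = w)
    (α β μ ρ lam : ℝ) (hβ : β ≠ 0)
    (heq : ∀ i j, α * R i j + β * H i j + μ * f i * f j
      = (ρ * (∑ t, R t t) + lam) * kdelta i j)
    (h : Fin m → Fin m → ℝ) (hdef : ∀ a b, h a b = - H a b / w)
    (hmean : ℝ)
    (hmeandef : hmean = (1 / ((m : ℝ) - 1)) * ∑ a ∈ Finset.univ.erase e, h a a) :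
    ∑ a ∈ Finset.univ.erase e, ∑ b ∈ Finset.univ.erase e,
        (h a b - hmean * kdelta a b) ^ 2
      = (α ^ 2 / (β ^ 2 * w ^ 2)) *
          ((∑ i, ∑ j, (R i j) ^ 2)
            - 2 * ∑ a ∈ Finset.univ.erase e, (R a e) ^ 2
            - ((m : ℝ) / ((m : ℝ) - 1)) * (R e e) ^ 2
            - (∑ t, R t t) ^ 2 / ((m : ℝ) - 1)
            + (2 / ((m : ℝ) - 1)) * (∑ t, R t t) * R e e) :=
  traceless_second_fundamental_form_norm_sq_general m hm R H hR f e w hfa α β μ ρ lam hβ heq h hdef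
    hmean hmeandef
end
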